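/- arXiv:1910.03807 — 8 statements merged into one kernel-verified Lean document; each statement's English description precedes it below -/
import Mathlib

section
/- Let ρ ≥ 0, S ≥ 0, C_D > 0, and let C_L, C_t, W_x, W_z, α be real numbers and V ≥ 0. Then the available power of a crosswind kite with zero sideslip and co-linear kite and turbine drag, P_a = (1/2)ρSV²(W_x(C_L sin α − (C_D + C_t) cos α) − W_z(C_L cos α + (C_D + C_t) sin α) − V C_D), satisfies P_a ≤ (2/27)ρS·(√(W_x² + W_z²))³·(√(C_L² + (C_D + C_t)²))³ / C_D². -/
open Real

lemma key_cubic (C_D V E M : ℝ) (hC : 0 < C_D) (hV : 0 ≤ V) (hM : 0 ≤ M)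
    (hE : E ≤ M) :
    (1/2) * V^2 * (E - V * C_D) ≤ (2/27) * M^3 / C_D^2 := by
  rw [le_div_iff₀ (by positivity : (0:ℝ) < C_D^2)]
  nlinarith [mul_nonneg (sq_nonneg (3*C_D*V - 2*M)) (by positivity : (0:ℝ) ≤ 3*C_D*V + M),
    mul_le_mul_of_nonneg_left hE (by positivity : (0:ℝ) ≤ V^2 * C_D^2)]

/-- **Theorem 1, Diehl's limit.** For a crosswind kite with on-board
turbine, zero sideslip and co-linear kite and turbine drag, the available power is
bounded by `(2/27) ρ S (√(W_x² + W_z²))³ (√(C_L² + (C_D + C_t)²))³ / C_D²`. -/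
theorem diehl_limit
    (ρ S C_D C_L C_t W_x W_z α V : ℝ)
    (hρ : 0 ≤ ρ) (hS : 0 ≤ S) (hCD : 0 < C_D) (hV : 0 ≤ V) :
    (1/2) * ρ * S * V^2 *
        (W_x * (C_L * sin α - (C_D + C_t) * cos α)
          - W_z * (C_L * cos α + (C_D + C_t) * sin α) - V * C_D) ≤
      (2/27) * ρ * S * (Real.sqrt (W_x^2 + W_z^2))^3 *
        (Real.sqrt (C_L^2 + (C_D + C_t)^2))^3 / C_D^2 := by
  set M1 := Real.sqrt (W_x^2 + W_z^2) with hM1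
  set M2 := Real.sqrt (C_L^2 + (C_D + C_t)^2) with hM2
  set E : ℝ := W_x * (C_L * sin α - (C_D + C_t) * cos α)
      - W_z * (C_L * cos α + (C_D + C_t) * sin α) with hEdef
  have hM1n : 0 ≤ M1 := Real.sqrt_nonneg _
  have hM2n : 0 ≤ M2 := Real.sqrt_nonneg _
  have hM1s : M1^2 = W_x^2 + W_z^2 := Real.sq_sqrt (by positivity)
  have hM2s : M2^2 = C_L^2 + (C_D + C_t)^2 := Real.sq_sqrt (by positivity)
  have hsc : sin α ^ 2 + cos α ^ 2 = 1 := sin_sq_add_cos_sq α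
  have hsq : E^2 ≤ (M1*M2)^2 := by
    have : (M1*M2)^2 = (W_x^2 + W_z^2) * (C_L^2 + (C_D + C_t)^2) := by
      rw [mul_pow, hM1s, hM2s]
    rw [this, hEdef]
    nlinarith [sq_nonneg (W_x * (C_L * cos α + (C_D + C_t) * sin α)
      + W_z * (C_L * sin α - (C_D + C_t) * cos α)), hsc, sq_nonneg C_L,
      sq_nonneg (C_D + C_t)]
  have hE : E ≤ M1 * M2 := by nlinarith [mul_nonneg hM1n hM2n]
  have h := key_cubic C_D V E (M1 * M2) hCD hV (mul_nonneg hM1n hM2n) hE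
  calc (1/2) * ρ * S * V^2 * (E - V * C_D)
      = ρ * S * ((1/2) * V^2 * (E - V * C_D)) := by ring
    _ ≤ ρ * S * ((2/27) * (M1*M2)^3 / C_D^2) :=
        mul_le_mul_of_nonneg_left h (by positivity)
    _ = (2/27) * ρ * S * M1^3 * M2^3 / C_D^2 := by ring
end

section
/- Let ρ ≥ 0, S ≥ 0, C_D > 0, and let C_L, W_x, W_z, α be real numbers and V ≥ 0. Then the available power of a crosswind kite without on-board turbine at zero sideslip, P_a = (1/2)ρSV²(W_x(C_L sin α − C_D cos α) − W_z(C_L cos α + C_D sin α) − V C_D), satisfies Loyd's limit: P_a ≤ (2/27)ρS·(√(W_x² + W_z²))³·(√(C_L² + C_D²))³ / C_D². -/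
open Real

/-- **Loyd's limit.** For a crosswind kite without on-board turbine at
zero sideslip, the available power is bounded by
`(2/27) ρ S (√(W_x² + W_z²))³ (√(C_L² + C_D²))³ / C_D²`. -/
theorem loyd_limit
    (ρ S C_D C_L W_x W_z α V : ℝ)
    (hρ : 0 ≤ ρ) (hS : 0 ≤ S) (hCD : 0 < C_D) (hV : 0 ≤ V) :
    (1/2) * ρ * S * V^2 *
        (W_x * (C_L * sin α - C_D * cos α)
          - W_z * (C_L * cos α + C_D * sin α) - V * C_D) ≤
      (2/27) * ρ * S * (Real.sqrt (W_x^2 + W_z^2))^3 *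
        (Real.sqrt (C_L^2 + C_D^2))^3 / C_D^2 := by
  set a := Real.sqrt (W_x^2 + W_z^2) with ha_def
  set b := Real.sqrt (C_L^2 + C_D^2) with hb_def
  have ha : 0 ≤ a := Real.sqrt_nonneg _
  have hb : 0 ≤ b := Real.sqrt_nonneg _
  have ha2 : a^2 = W_x^2 + W_z^2 := Real.sq_sqrt (by positivity)
  have hb2 : b^2 = C_L^2 + C_D^2 := Real.sq_sqrt (by positivity)
  have hsc : sin α ^2 + cos α ^2 = 1 := sin_sq_add_cos_sq α
  obtain ⟨E, hE_def⟩ : ∃ E, W_x * (C_L * sin α - C_D * cos α)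
      - W_z * (C_L * cos α + C_D * sin α) = E := ⟨_, rfl⟩
  rw [hE_def]
  have key : E^2 + (W_x*(C_L * cos α + C_D * sin α) + W_z*(C_L * sin α - C_D * cos α))^2
      = (W_x^2 + W_z^2) * (C_L^2 + C_D^2) := by
    rw [← hE_def]
    linear_combination (W_x^2 + W_z^2) * (C_L^2 + C_D^2) * hsc
  have ab2 : (a*b)^2 = (W_x^2 + W_z^2) * (C_L^2 + C_D^2) := by
    rw [mul_pow, ha2, hb2]
  have key2 : E^2 ≤ (a*b)^2 := by
    nlinarith [sq_nonneg (W_x*(C_L * cos α + C_D * sin α) + W_z*(C_L * sin α - C_D * cos α))]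
  have hE : E ≤ a * b := by
    nlinarith [mul_nonneg ha hb]
  have h1 : 0 ≤ C_D^2 * (V^2 * (a*b - E)) :=
    mul_nonneg (sq_nonneg _) (mul_nonneg (sq_nonneg V) (sub_nonneg.2 hE))
  have h2 : 0 ≤ (2*a*b - 3*C_D*V)^2 * (a*b + 3*C_D*V) := by positivity
  have h2e : (2*a*b - 3*C_D*V)^2 * (a*b + 3*C_D*V)
      = 4*a^3*b^3 - 27*(a*b)*(C_D^2*V^2) + 27*C_D^3*V^3 := by ring
  have hkey : C_D^2 * (V^2 * (E - V*C_D)) ≤ (4/27) * (a^3 * b^3) := by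
    rw [h2e] at h2
    linarith [h1, h2]
  rw [le_div_iff₀ (by positivity : (0:ℝ) < C_D^2)]
  have hfin := mul_le_mul_of_nonneg_left hkey
    (by positivity : (0:ℝ) ≤ (1/2) * (ρ * S))
  nlinarith [hfin]
end

section
/- Let ρ ≥ 0, S ≥ 0, C_D > 0, C_t ≥ 0, W_x ≤ 0, and let C_L, W_z, α be real numbers and V ≥ 0. Then the available power of a crosswind kite at zero sideslip (without assuming co-linear drags), P_a = (1/2)ρSV²(W_x(C_L sin α − C_D cos α − C_t) − W_z(C_L cos α + C_D sin α) − V C_D), satisfies P_a ≤ (2/27)ρS·(√((W_x² + W_z²)(C_L² + C_D²)) − W_x C_t)³ / C_D². -/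
open Real

private lemma cube_bound (K b c v : ℝ) (hK : 0 ≤ K) (hb : b ≤ K) (hc : 0 < c)
    (hv : 0 ≤ v) : v^2 * (b - v * c) ≤ (4/27) * K^3 / c^2 := by
  rw [le_div_iff₀ (by positivity : (0:ℝ) < c^2)]
  nlinarith [mul_nonneg (sq_nonneg (3 * c * v - 2 * K))
      (by positivity : (0:ℝ) ≤ 3 * c * v + K),
    mul_nonneg (mul_nonneg (sq_nonneg v) (sq_nonneg c)) (sub_nonneg.mpr hb)]

/-- **Corollary 1.** For a crosswind kite with on-board turbine whose
drag acts along the first body axis (not assumed co-linear with the kite drag), at zero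
sideslip and with `W_x ≤ 0`, the available power is bounded by
`(2/27) ρ S (√((W_x² + W_z²)(C_L² + C_D²)) − W_x C_t)³ / C_D²`. -/
theorem zero_sideslip_limit
    (ρ S C_D C_t C_L W_x W_z α V : ℝ)
    (hρ : 0 ≤ ρ) (hS : 0 ≤ S) (hCD : 0 < C_D) (hCt : 0 ≤ C_t)
    (hWx : W_x ≤ 0) (hV : 0 ≤ V) :
    (1/2) * ρ * S * V^2 *
        (W_x * (C_L * sin α - C_D * cos α - C_t)
          - W_z * (C_L * cos α + C_D * sin α) - V * C_D) ≤
      (2/27) * ρ * S *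
        (Real.sqrt ((W_x^2 + W_z^2) * (C_L^2 + C_D^2)) - W_x * C_t)^3 / C_D^2 := by
  have hKs : 0 ≤ Real.sqrt ((W_x^2 + W_z^2) * (C_L^2 + C_D^2)) := Real.sqrt_nonneg _
  have hK : 0 ≤ Real.sqrt ((W_x^2 + W_z^2) * (C_L^2 + C_D^2)) - W_x * C_t := by nlinarith
  have hs := Real.sin_sq_add_cos_sq α
  have h1 : W_x * (C_L * sin α - C_D * cos α) - W_z * (C_L * cos α + C_D * sin α)
      ≤ Real.sqrt ((W_x^2 + W_z^2) * (C_L^2 + C_D^2)) := by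
    have hsq : (W_x * (C_L * sin α - C_D * cos α)
        - W_z * (C_L * cos α + C_D * sin α))^2 ≤ (W_x^2 + W_z^2) * (C_L^2 + C_D^2) := by
      nlinarith [sq_nonneg (W_x * (C_L * cos α + C_D * sin α)
        + W_z * (C_L * sin α - C_D * cos α)), hs]
    calc _ ≤ |W_x * (C_L * sin α - C_D * cos α) - W_z * (C_L * cos α + C_D * sin α)| :=
        le_abs_self _
      _ = Real.sqrt ((W_x * (C_L * sin α - C_D * cos α)
            - W_z * (C_L * cos α + C_D * sin α))^2) := (Real.sqrt_sq_eq_abs _).symm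
      _ ≤ _ := Real.sqrt_le_sqrt hsq
  have hE : W_x * (C_L * sin α - C_D * cos α - C_t) - W_z * (C_L * cos α + C_D * sin α)
      ≤ Real.sqrt ((W_x^2 + W_z^2) * (C_L^2 + C_D^2)) - W_x * C_t := by linarith [h1]
  have hcore := cube_bound _ _ _ _ hK hE hCD hV
  calc (1/2) * ρ * S * V^2 *
        (W_x * (C_L * sin α - C_D * cos α - C_t)
          - W_z * (C_L * cos α + C_D * sin α) - V * C_D)
      = (1/2 * ρ * S) * (V^2 *
        ((W_x * (C_L * sin α - C_D * cos α - C_t)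
          - W_z * (C_L * cos α + C_D * sin α)) - V * C_D)) := by ring
    _ ≤ (1/2 * ρ * S) * ((4/27) *
        (Real.sqrt ((W_x^2 + W_z^2) * (C_L^2 + C_D^2)) - W_x * C_t)^3 / C_D^2) :=
        mul_le_mul_of_nonneg_left hcore (by positivity)
    _ = _ := by ring
end

section
/- Let ρ ≥ 0, S ≥ 0, C_D > 0, C_t ≥ 0, C_β ≤ 0, W_x ≤ 0, and let C_L, W_y, W_z, α, β be real numbers and V ≥ 0. Define γ₁ = √((W_x² + W_z²)(C_L² + C_D²)) − W_x C_t, γ₂² = −3C_β W_y²/(4C_D), and γ₃ = √(γ₁² + C_D²γ₂²). Then the available power with linearized side force, P_a = (1/2)ρSV²(W_x(C_L sin α − C_D cos α − C_t) + W_y C_β β − W_z(C_L cos α + C_D sin α) + V(−C_D + C_β β²)), satisfies P_a ≤ (1/2)ρS·(γ₁² + 2C_D²γ₂² + γ₁γ₃)(γ₁ + γ₃)/(27 C_D²). -/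
open Real

set_option maxHeartbeats 1000000 in
/-- **Theorem 2.** Small-sideslip power limit: with linearized side force
`C_y = C_β β` (`C_β ≤ 0`), `W_x ≤ 0`, and
`γ₁ = √((W_x² + W_z²)(C_L² + C_D²)) − W_x C_t`, `γ₂² = −3C_β W_y²/(4C_D)`,
`γ₃ = √(γ₁² + C_D² γ₂²)`, the available power is bounded by
`(1/2) ρ S (γ₁² + 2C_D²γ₂² + γ₁γ₃)(γ₁ + γ₃)/(27 C_D²)`. -/
theorem small_sideslip_power_limit
    (ρ S C_D C_t C_β C_L W_x W_y W_z α β V : ℝ)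
    (hρ : 0 ≤ ρ) (hS : 0 ≤ S) (hCD : 0 < C_D) (hCt : 0 ≤ C_t)
    (hCβ : C_β ≤ 0) (hWx : W_x ≤ 0) (hV : 0 ≤ V)
    (γ₁ γ₂sq γ₃ : ℝ)
    (hγ₁ : γ₁ = Real.sqrt ((W_x^2 + W_z^2) * (C_L^2 + C_D^2)) - W_x * C_t)
    (hγ₂sq : γ₂sq = -(3 * C_β) * W_y^2 / (4 * C_D))
    (hγ₃ : γ₃ = Real.sqrt (γ₁^2 + C_D^2 * γ₂sq)) :
    (1/2) * ρ * S * V^2 *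
        (W_x * (C_L * sin α - C_D * cos α - C_t) + W_y * C_β * β
          - W_z * (C_L * cos α + C_D * sin α) + V * (-C_D + C_β * β^2)) ≤
      (1/2) * ρ * S *
        ((γ₁^2 + 2 * C_D^2 * γ₂sq + γ₁ * γ₃) * (γ₁ + γ₃) / (27 * C_D^2)) := by
  obtain ⟨Q, hQ⟩ : ∃ q, q = Real.sqrt ((W_x^2 + W_z^2) * (C_L^2 + C_D^2)) := ⟨_, rfl⟩
  rw [← hQ] at hγ₁
  have hQnn : 0 ≤ Q := hQ ▸ Real.sqrt_nonneg _
  have hQsq : Q^2 = (W_x^2 + W_z^2) * (C_L^2 + C_D^2) := by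
    rw [hQ]; exact Real.sq_sqrt (by positivity)
  have hγ₁nn : 0 ≤ γ₁ := by
    rw [hγ₁]; nlinarith [mul_nonneg (neg_nonneg.mpr hWx) hCt]
  have hγ₂nn : 0 ≤ γ₂sq := by
    rw [hγ₂sq]
    have : 0 ≤ -(3 * C_β) * W_y^2 := by nlinarith [sq_nonneg W_y]
    positivity
  have hγ₃nn : 0 ≤ γ₃ := by rw [hγ₃]; exact Real.sqrt_nonneg _
  have hγ₃sq : γ₃^2 = γ₁^2 + C_D^2 * γ₂sq := by
    rw [hγ₃]; exact Real.sq_sqrt (by positivity)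
  have hγ₃ge : γ₁ ≤ γ₃ := by nlinarith [mul_nonneg (sq_nonneg C_D) hγ₂nn]
  -- Cauchy–Schwarz bound on the α-dependent part
  have hA : W_x * (C_L * sin α - C_D * cos α) - W_z * (C_L * cos α + C_D * sin α) ≤ Q := by
    have hpy : sin α ^ 2 + cos α ^ 2 = 1 := sin_sq_add_cos_sq α
    nlinarith [sq_nonneg (W_x * (C_L * sin α - C_D * cos α) - W_z * (C_L * cos α + C_D * sin α) - Q),
      sq_nonneg (W_x * (C_L * cos α + C_D * sin α) + W_z * (C_L * sin α - C_D * cos α)), hQnn, hQsq]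
  -- β bound
  have hβ : V^2 * (W_y * C_β * β) + V^3 * (C_β * β^2) ≤ -C_β * W_y^2 * V / 4 := by
    have h := mul_nonpos_of_nonpos_of_nonneg hCβ (mul_nonneg hV (sq_nonneg (V * β + W_y / 2)))
    have he : V^2 * (W_y * C_β * β) + V^3 * (C_β * β^2) - (-C_β * W_y^2 * V / 4)
        = C_β * (V * (V * β + W_y / 2)^2) := by ring
    linarith
  have hc : C_D * γ₂sq / 3 = -C_β * W_y^2 / 4 := by
    rw [hγ₂sq]; field_simp
  -- step 1: bound the expression by the cubic f(V)
  have key : V^2 * (W_x * (C_L * sin α - C_D * cos α - C_t) + W_y * C_β * β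
      - W_z * (C_L * cos α + C_D * sin α) + V * (-C_D + C_β * β^2)) ≤
      γ₁ * V^2 - C_D * V^3 + (C_D * γ₂sq / 3) * V := by
    have h1 : V^2 * (W_x * (C_L * sin α - C_D * cos α)
        - W_z * (C_L * cos α + C_D * sin α)) ≤ V^2 * Q :=
      mul_le_mul_of_nonneg_left hA (sq_nonneg V)
    rw [hγ₁, hc]
    nlinarith [h1, hβ]
  -- step 2: cubic bound
  have cubic : γ₁ * V^2 - C_D * V^3 + (C_D * γ₂sq / 3) * V ≤
      (γ₁^2 + 2 * C_D^2 * γ₂sq + γ₁ * γ₃) * (γ₁ + γ₃) / (27 * C_D^2) := by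
    have h1 : 0 ≤ 3 * C_D * V + 2 * γ₃ - γ₁ := by nlinarith [mul_nonneg hCD.le hV]
    have h2 : 0 ≤ C_D * ((3 * C_D * V - γ₁ - γ₃)^2 * (3 * C_D * V + 2 * γ₃ - γ₁)) :=
      mul_nonneg hCD.le (mul_nonneg (sq_nonneg _) h1)
    rw [le_div_iff₀ (by positivity)]
    nlinarith [h2, hγ₃sq]
  calc (1/2) * ρ * S * V^2 * (W_x * (C_L * sin α - C_D * cos α - C_t) + W_y * C_β * β
          - W_z * (C_L * cos α + C_D * sin α) + V * (-C_D + C_β * β^2))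
      ≤ (1/2) * ρ * S * (γ₁ * V^2 - C_D * V^3 + (C_D * γ₂sq / 3) * V) := by
        have := mul_le_mul_of_nonneg_left key (by positivity : (0:ℝ) ≤ (1/2) * ρ * S)
        linarith [this]
    _ ≤ (1/2) * ρ * S * ((γ₁^2 + 2 * C_D^2 * γ₂sq + γ₁ * γ₃) * (γ₁ + γ₃) / (27 * C_D^2)) :=
        mul_le_mul_of_nonneg_left cubic (by positivity)
end

section
/- Let ρ ≥ 0, S ≥ 0, C_D > 0, C_t ≥ 0, C_β ≤ 0, W_x ≤ 0, and let C_L, W_y, W_z be real numbers. Define 𝒫₁ = (2/27)ρS(√(W_x²+W_z²))³(√(C_L²+C_D²))³/C_D², γ₁ = √((W_x²+W_z²)(C_L²+C_D²)) − W_x C_t, γ₂² = −3C_β W_y²/(4C_D), γ₃ = √(γ₁² + C_D²γ₂²), 𝒫₃ = (2/27)ρS γ₁³/C_D², and 𝒫₄ = (1/2)ρS(γ₁² + 2C_D²γ₂² + γ₁γ₃)(γ₁ + γ₃)/(27C_D²). Then 𝒫₁ ≤ 𝒫₃ ≤ 𝒫₄. -/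
/-- **Remark 3.** Order relation between Loyd's limit, the zero-sideslip
limit and the small-sideslip limit: `𝒫₁ ≤ 𝒫₃ ≤ 𝒫₄`. -/
theorem P1_le_P3_le_P4
    (ρ S C_D C_t C_β C_L W_x W_y W_z : ℝ)
    (hρ : 0 ≤ ρ) (hS : 0 ≤ S) (hCD : 0 < C_D) (hCt : 0 ≤ C_t)
    (hCβ : C_β ≤ 0) (hWx : W_x ≤ 0)
    (P₁ γ₁ γ₂sq γ₃ P₃ P₄ : ℝ)
    (hP₁ : P₁ = (2/27) * ρ * S * (Real.sqrt (W_x^2 + W_z^2))^3 *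
        (Real.sqrt (C_L^2 + C_D^2))^3 / C_D^2)
    (hγ₁ : γ₁ = Real.sqrt ((W_x^2 + W_z^2) * (C_L^2 + C_D^2)) - W_x * C_t)
    (hγ₂sq : γ₂sq = -(3 * C_β) * W_y^2 / (4 * C_D))
    (hγ₃ : γ₃ = Real.sqrt (γ₁^2 + C_D^2 * γ₂sq))
    (hP₃ : P₃ = (2/27) * ρ * S * γ₁^3 / C_D^2)
    (hP₄ : P₄ = (1/2) * ρ * S *
        ((γ₁^2 + 2 * C_D^2 * γ₂sq + γ₁ * γ₃) * (γ₁ + γ₃) / (27 * C_D^2))) :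
    P₁ ≤ P₃ ∧ P₃ ≤ P₄ := by
  have hW : (0:ℝ) ≤ W_x^2 + W_z^2 := by positivity
  have hC : (0:ℝ) ≤ C_L^2 + C_D^2 := by positivity
  have hab : Real.sqrt (W_x^2 + W_z^2) * Real.sqrt (C_L^2 + C_D^2)
      = Real.sqrt ((W_x^2 + W_z^2) * (C_L^2 + C_D^2)) :=
    (Real.sqrt_mul hW _).symm
  have hs : (0:ℝ) ≤ Real.sqrt ((W_x^2 + W_z^2) * (C_L^2 + C_D^2)) := Real.sqrt_nonneg _
  have hWxCt : 0 ≤ -(W_x * C_t) := by nlinarith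
  have hγ₁pos : 0 ≤ γ₁ := by rw [hγ₁]; linarith
  have hle : Real.sqrt ((W_x^2 + W_z^2) * (C_L^2 + C_D^2)) ≤ γ₁ := by
    rw [hγ₁]; linarith
  have hγ₂ : 0 ≤ γ₂sq := by
    rw [hγ₂sq]
    have : 0 ≤ -(3 * C_β) * W_y^2 := by nlinarith
    positivity
  have hγ₃ge : γ₁ ≤ γ₃ := by
    rw [hγ₃]
    calc γ₁ = Real.sqrt (γ₁^2) := by rw [Real.sqrt_sq hγ₁pos]
    _ ≤ _ := by
        apply Real.sqrt_le_sqrt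
        nlinarith
  have hγ₃pos : 0 ≤ γ₃ := le_trans hγ₁pos hγ₃ge
  constructor
  · rw [hP₁, hP₃]
    have hcube : (Real.sqrt (W_x^2 + W_z^2))^3 * (Real.sqrt (C_L^2 + C_D^2))^3 ≤ γ₁^3 := by
      have h1 : (Real.sqrt (W_x^2 + W_z^2))^3 * (Real.sqrt (C_L^2 + C_D^2))^3
          = (Real.sqrt ((W_x^2 + W_z^2) * (C_L^2 + C_D^2)))^3 := by
        rw [← hab]; ring
      rw [h1]
      exact pow_le_pow_left₀ hs hle 3
    have hρS : 0 ≤ ρ * S := mul_nonneg hρ hS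
    have h1 : 2/27 * ρ * S * Real.sqrt (W_x^2 + W_z^2)^3 * Real.sqrt (C_L^2 + C_D^2)^3 / C_D^2
        = (2/27 * (ρ*S)) * (Real.sqrt (W_x^2 + W_z^2)^3 * Real.sqrt (C_L^2 + C_D^2)^3) / C_D^2 := by
      ring
    have h2 : 2/27 * ρ * S * γ₁^3 / C_D^2 = (2/27 * (ρ*S)) * γ₁^3 / C_D^2 := by ring
    rw [h1, h2]
    gcongr
  · rw [hP₃, hP₄]
    have hcd : (0:ℝ) < C_D^2 := by positivity
    have t1 : 0 ≤ γ₁^2 * (γ₃ - γ₁) := mul_nonneg (by positivity) (by linarith)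
    have t2 : 0 ≤ γ₁ * ((γ₃ - γ₁) * (γ₃ + γ₁)) :=
      mul_nonneg hγ₁pos (mul_nonneg (by linarith) (by linarith))
    have t3 : 0 ≤ C_D^2 * γ₂sq * (γ₁ + γ₃) :=
      mul_nonneg (mul_nonneg (by positivity) hγ₂) (by linarith)
    have key : 4 * γ₁^3 ≤ (γ₁^2 + 2 * C_D^2 * γ₂sq + γ₁ * γ₃) * (γ₁ + γ₃) := by
      nlinarith [t1, t2, t3]
    have hρS : 0 ≤ ρ * S := mul_nonneg hρ hS
    have h1 : 2/27 * ρ * S * γ₁ ^ 3 / C_D ^ 2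
        = ρ * S * (4 * γ₁^3) / (54 * C_D^2) := by ring
    have h2 : 1/2 * ρ * S * ((γ₁ ^ 2 + 2 * C_D ^ 2 * γ₂sq + γ₁ * γ₃) * (γ₁ + γ₃) / (27 * C_D ^ 2))
        = ρ * S * ((γ₁ ^ 2 + 2 * C_D ^ 2 * γ₂sq + γ₁ * γ₃) * (γ₁ + γ₃)) / (54 * C_D^2) := by
      ring
    rw [h1, h2]
    gcongr
end

section
/- Let ρ ≥ 0, S ≥ 0, C_D > 0, C_t ≥ 0, W_x ≤ 0, and let C_L be a real number, and suppose W_z = 0. Define 𝒫₂ = (2/27)ρS(√(W_x²+W_z²))³(√(C_L²+(C_D+C_t)²))³/C_D² and 𝒫₃ = (2/27)ρS(√((W_x²+W_z²)(C_L²+C_D²)) − W_x C_t)³/C_D². Then 𝒫₂ ≤ 𝒫₃. -/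
/-- **Remark 3.** If the wind is aligned with the turbine axis
(`W_z = 0`, `W_x ≤ 0`), then Diehl's limit is dominated by the zero-sideslip limit:
`𝒫₂ ≤ 𝒫₃`. -/
theorem P2_le_P3_of_Wz_zero
    (ρ S C_D C_t C_L W_x W_z : ℝ)
    (hρ : 0 ≤ ρ) (hS : 0 ≤ S) (hCD : 0 < C_D) (hCt : 0 ≤ C_t)
    (hWx : W_x ≤ 0) (hWz : W_z = 0)
    (P₂ P₃ : ℝ)
    (hP₂ : P₂ = (2/27) * ρ * S * (Real.sqrt (W_x^2 + W_z^2))^3 *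
        (Real.sqrt (C_L^2 + (C_D + C_t)^2))^3 / C_D^2)
    (hP₃ : P₃ = (2/27) * ρ * S *
        (Real.sqrt ((W_x^2 + W_z^2) * (C_L^2 + C_D^2)) - W_x * C_t)^3 / C_D^2) :
    P₂ ≤ P₃ := by
  subst hWz hP₂ hP₃
  have hW : Real.sqrt (W_x^2 + 0^2) = -W_x := by
    rw [show W_x^2 + 0^2 = (-W_x)^2 by ring, Real.sqrt_sq (by linarith)]
  have hW2 : Real.sqrt ((W_x^2 + 0^2) * (C_L^2 + C_D^2))
      = (-W_x) * Real.sqrt (C_L^2 + C_D^2) := by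
    rw [Real.sqrt_mul (by positivity), hW]
  have hs := Real.sq_sqrt (show (0:ℝ) ≤ C_L^2 + C_D^2 by positivity)
  have h0 : 0 ≤ Real.sqrt (C_L^2 + C_D^2) := Real.sqrt_nonneg _
  have h1 : C_D ≤ Real.sqrt (C_L^2 + C_D^2) := by nlinarith
  have hkey : Real.sqrt (C_L^2 + (C_D + C_t)^2) ≤ Real.sqrt (C_L^2 + C_D^2) + C_t := by
    calc Real.sqrt (C_L^2 + (C_D + C_t)^2)
        ≤ Real.sqrt ((Real.sqrt (C_L^2 + C_D^2) + C_t)^2) :=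
          Real.sqrt_le_sqrt (by nlinarith)
      _ = _ := Real.sqrt_sq (by positivity)
  have hWn : 0 ≤ -W_x := by linarith
  have hcube : ((-W_x) * Real.sqrt (C_L^2 + (C_D + C_t)^2))^3
      ≤ ((-W_x) * (Real.sqrt (C_L^2 + C_D^2) + C_t))^3 := by
    apply pow_le_pow_left₀ (by positivity)
    exact mul_le_mul_of_nonneg_left hkey hWn
  rw [hW, hW2]
  have h3 : ((-W_x)^3 * (Real.sqrt (C_L^2 + (C_D + C_t)^2))^3)
      ≤ (-W_x * Real.sqrt (C_L^2 + C_D^2) - W_x * C_t)^3 := by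
    calc ((-W_x)^3 * (Real.sqrt (C_L^2 + (C_D + C_t)^2))^3)
        = ((-W_x) * Real.sqrt (C_L^2 + (C_D + C_t)^2))^3 := by ring
      _ ≤ ((-W_x) * (Real.sqrt (C_L^2 + C_D^2) + C_t))^3 := hcube
      _ = (-W_x * Real.sqrt (C_L^2 + C_D^2) - W_x * C_t)^3 := by ring
  gcongr ?_ / C_D^2
  nlinarith [mul_le_mul_of_nonneg_left h3 (show (0:ℝ) ≤ 2/27*ρ*S by positivity)]
end

section
/- Let ρ ≥ 0, S ≥ 0, C_D > 0, C_t ≥ 0, W_x ≤ 0, and let C_L, W_z be real numbers. Define 𝒫₀ = (2/27)ρS(−W_x(C_D+C_t) − W_z C_L)³/C_D², 𝒫₁ = (2/27)ρS(√(W_x²+W_z²))³(√(C_L²+C_D²))³/C_D², and 𝒫₃ = (2/27)ρS(√((W_x²+W_z²)(C_L²+C_D²)) − W_x C_t)³/C_D². Then 𝒫₀ ≤ 𝒫₃; moreover if C_t = 0 then 𝒫₀ ≤ 𝒫₁. -/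
/-- **Corollary 3.** The zero-attitude limit is dominated by the
zero-sideslip limit, `𝒫₀ ≤ 𝒫₃`; and if there is no on-board turbine (`C_t = 0`) it is
dominated by Loyd's limit, `𝒫₀ ≤ 𝒫₁`. -/
theorem P0_le_P3_and_P0_le_P1
    (ρ S C_D C_t C_L W_x W_z : ℝ)
    (hρ : 0 ≤ ρ) (hS : 0 ≤ S) (hCD : 0 < C_D) (hCt : 0 ≤ C_t) (hWx : W_x ≤ 0)
    (P₀ P₁ P₃ : ℝ)
    (hP₀ : P₀ = (2/27) * ρ * S * (-W_x * (C_D + C_t) - W_z * C_L)^3 / C_D^2)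
    (hP₁ : P₁ = (2/27) * ρ * S * (Real.sqrt (W_x^2 + W_z^2))^3 *
        (Real.sqrt (C_L^2 + C_D^2))^3 / C_D^2)
    (hP₃ : P₃ = (2/27) * ρ * S *
        (Real.sqrt ((W_x^2 + W_z^2) * (C_L^2 + C_D^2)) - W_x * C_t)^3 / C_D^2) :
    P₀ ≤ P₃ ∧ (C_t = 0 → P₀ ≤ P₁) := by
  set t : ℝ := -W_x * C_D - W_z * C_L with ht
  set M : ℝ := (W_x^2 + W_z^2) * (C_L^2 + C_D^2) with hM
  have hcs : t ≤ Real.sqrt M := by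
    have h1 : t ≤ |t| := le_abs_self t
    have h2 : |t| = Real.sqrt (t^2) := (Real.sqrt_sq_eq_abs t).symm
    have h3 : t^2 ≤ M := by rw [ht, hM]; nlinarith [sq_nonneg (W_x * C_L - W_z * C_D)]
    calc t ≤ |t| := h1
      _ = Real.sqrt (t^2) := h2
      _ ≤ Real.sqrt M := Real.sqrt_le_sqrt h3
  have hbase : -W_x * (C_D + C_t) - W_z * C_L ≤ Real.sqrt M - W_x * C_t := by
    have : -W_x * (C_D + C_t) - W_z * C_L = t + (-W_x * C_t) := by ring
    linarith
  have hcube : (-W_x * (C_D + C_t) - W_z * C_L)^3 ≤ (Real.sqrt M - W_x * C_t)^3 :=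
    by
    have hm : StrictMono fun a : ℝ => a ^ 3 := Odd.strictMono_pow ⟨1, by norm_num⟩
    exact hm.le_iff_le.mpr hbase
  have hc : (0:ℝ) ≤ (2/27) * ρ * S / C_D^2 := by positivity
  have hmain : P₀ ≤ P₃ := by
    rw [hP₀, hP₃]
    have := mul_le_mul_of_nonneg_left hcube hc
    calc (2/27) * ρ * S * (-W_x * (C_D + C_t) - W_z * C_L)^3 / C_D^2
        = (2/27) * ρ * S / C_D^2 * (-W_x * (C_D + C_t) - W_z * C_L)^3 := by ring
      _ ≤ (2/27) * ρ * S / C_D^2 * (Real.sqrt M - W_x * C_t)^3 := this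
      _ = (2/27) * ρ * S * (Real.sqrt M - W_x * C_t)^3 / C_D^2 := by ring
  refine ⟨hmain, fun h0 => ?_⟩
  have hsq : Real.sqrt M = Real.sqrt (W_x^2 + W_z^2) * Real.sqrt (C_L^2 + C_D^2) :=
    Real.sqrt_mul (by positivity) _
  have : P₁ = P₃ := by
    rw [hP₁, hP₃, h0, hsq]; ring
  rw [this]; exact hmain
end

section
/- Let ρ ≥ 0, S ≥ 0, and let α, β, C_L, C_D, C_t, C_y, W_x, W_y, W_z be real numbers. Define W̄ = W_x(C_L sin α − (C_D + C_t) cos α) + W_y C_y − W_z(C_L cos α + (C_D + C_t) sin α) and C̄ = −C_D cos β + C_y sin β, and assume W̄ ≥ 0 and C̄ < 0. Then for every real V ≥ 0, the available power P_a = (1/2)ρSV²(W̄ + V C̄) satisfies P_a ≤ (2/27)ρS·W̄³/C̄². -/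
open Real

/-- **Lemma 2.** Real-time power limit: with
`W̄ = W_x (C_L sin α − (C_D + C_t) cos α) + W_y C_y − W_z (C_L cos α + (C_D + C_t) sin α) ≥ 0`
and `C̄ = −C_D cos β + C_y sin β < 0`, the available power
`P_a = (1/2) ρ S V² (W̄ + V C̄)` is bounded by `(2/27) ρ S W̄³ / C̄²` for all `V ≥ 0`. -/
theorem realtime_power_limit
    (ρ S α β C_L C_D C_t C_y W_x W_y W_z : ℝ)
    (hρ : 0 ≤ ρ) (hS : 0 ≤ S)
    (Wbar Cbar : ℝ)
    (hW : Wbar = W_x * (C_L * sin α - (C_D + C_t) * cos α) + W_y * C_y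
        - W_z * (C_L * cos α + (C_D + C_t) * sin α))
    (hC : Cbar = -(C_D * cos β) + C_y * sin β)
    (hWnn : 0 ≤ Wbar) (hCneg : Cbar < 0) :
    ∀ V : ℝ, 0 ≤ V →
      (1/2) * ρ * S * V^2 * (Wbar + V * Cbar) ≤ (2/27) * ρ * S * Wbar^3 / Cbar^2 := by
  intro V hV
  have hC2 : 0 < Cbar^2 := by nlinarith
  rw [le_div_iff₀ hC2]
  have key : V^2 * (Wbar + V * Cbar) * Cbar^2 ≤ (4/27) * Wbar^3 := by
    nlinarith [sq_nonneg (3*V*Cbar + 2*Wbar), sq_nonneg (3*V*Cbar + Wbar), mul_nonneg hV hWnn, sq_nonneg V, mul_nonneg (mul_nonneg hV hV) hWnn, sq_nonneg (V*Cbar), mul_nonneg hV (sq_nonneg (3*V*Cbar+2*Wbar))]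
  nlinarith [mul_nonneg hρ hS, mul_le_mul_of_nonneg_left key (mul_nonneg hρ hS)]
end
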